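/- arXiv:2211.01496 — 6 statements merged into one kernel-verified Lean document; each statement's English description precedes it below -/
import Mathlib

section
/- Let m ≥ 1, let n : Fin m → ℕ be counts with N = ∑ i, n i > 0, let p̂ be the empirical distribution p̂ i = n i / N, and let q be any probability vector on Fin m. Then the function φ : [0,1] → ℝ defined by φ(t) = ∏ i, ((1−t)·p̂ i + t·q i)^(n i) is antitone (nonincreasing) on [0,1]; and if q i ≠ p̂ i for some index i with n i > 0, then φ is strictly decreasing on [0,1] (so the likelihood strictly decreases as the parameters move along the segment away from the empirical distribution). -/
open Finset Real

private lemma stmt1_key (m : ℕ) (n : Fin m → ℕ) (hN : 0 < ∑ i, n i)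
    (q : Fin m → ℝ) (hq0 : ∀ i, 0 ≤ q i) (hq1 : (∑ i, q i) = 1)
    {s t : ℝ} (hs0 : 0 ≤ s) (ht1 : t ≤ 1) (hst : s < t) :
    (∏ i, ((1 - t) * ((n i : ℝ) / ∑ j, (n j : ℝ)) + t * q i) ^ n i)
      ≤ (∏ i, ((1 - s) * ((n i : ℝ) / ∑ j, (n j : ℝ)) + s * q i) ^ n i) ∧
    ((∃ i, 0 < n i ∧ q i ≠ (n i : ℝ) / ∑ j, (n j : ℝ)) →
      (∏ i, ((1 - t) * ((n i : ℝ) / ∑ j, (n j : ℝ)) + t * q i) ^ n i)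
        < (∏ i, ((1 - s) * ((n i : ℝ) / ∑ j, (n j : ℝ)) + s * q i) ^ n i)) := by
  classical
  have ht0 : 0 < t := lt_of_le_of_lt hs0 hst
  have hs1 : s < 1 := lt_of_lt_of_le hst ht1
  set N : ℝ := ∑ j, (n j : ℝ) with hNdef
  have hNpos : 0 < N := by
    rw [hNdef]; exact_mod_cast hN
  set S : Finset (Fin m) := Finset.univ.filter (fun i => 0 < n i) with hSdef
  have hmemS : ∀ i, i ∈ S ↔ 0 < n i := by
    intro i; rw [hSdef]; simp
  set f : ℝ → Fin m → ℝ := fun u i => (1 - u) * ((n i : ℝ) / N) + u * q i with hfdef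
  have hfi : ∀ u i, f u i = (1 - u) * ((n i : ℝ) / N) + u * q i := by
    intro u i; rw [hfdef]
  have hpi_pos : ∀ i ∈ S, (0:ℝ) < (n i : ℝ) / N := by
    intro i hi
    have hni : 0 < n i := (hmemS i).1 hi
    have : (0:ℝ) < (n i : ℝ) := by exact_mod_cast hni
    exact div_pos this hNpos
  have hnS : ∑ i ∈ S, (n i : ℝ) = N := by
    rw [hNdef, hSdef]
    apply Finset.sum_filter_of_ne
    intro x _ hx
    have : n x ≠ 0 := by exact_mod_cast hx
    exact Nat.pos_of_ne_zero this
  have hsum_pS : ∑ i ∈ S, (n i : ℝ) / N = 1 := by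
    rw [← Finset.sum_div, hnS, div_self hNpos.ne']
  have hqS : ∑ i ∈ S, q i ≤ 1 := by
    rw [← hq1]
    exact Finset.sum_le_sum_of_subset_of_nonneg (Finset.subset_univ S)
      (fun i _ _ => hq0 i)
  have hfpos : ∀ u : ℝ, 0 ≤ u → u < 1 → ∀ i ∈ S, 0 < f u i := by
    intro u hu0 hu1 i hi
    have h1 := hpi_pos i hi
    have h2 : 0 < (1 - u) * ((n i:ℝ)/N) := mul_pos (by linarith) h1
    have h3 : 0 ≤ u * q i := mul_nonneg hu0 (hq0 i)
    rw [hfi]; linarith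
  have hfnn : ∀ u : ℝ, 0 ≤ u → u ≤ 1 → ∀ i, 0 ≤ f u i := by
    intro u hu0 hu1 i
    have h1 : (0:ℝ) ≤ (n i : ℝ) / N := div_nonneg (Nat.cast_nonneg _) hNpos.le
    have h2 : 0 ≤ (1 - u) * ((n i:ℝ)/N) := mul_nonneg (by linarith) h1
    have h3 : 0 ≤ u * q i := mul_nonneg hu0 (hq0 i)
    rw [hfi]; linarith
  have hprod : ∀ u : ℝ, (∏ i, f u i ^ n i) = ∏ i ∈ S, f u i ^ n i := by
    intro u
    rw [hSdef]
    symm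
    apply Finset.prod_filter_of_ne
    intro x _ hx
    rcases Nat.eq_zero_or_pos (n x) with h0 | h
    · exact absurd (by rw [h0, pow_zero]) hx
    · exact h
  set G : ℝ → ℝ := fun u => ∑ i ∈ S, (n i : ℝ) * Real.log (f u i) with hGdef
  have hGu : ∀ u, G u = ∑ i ∈ S, (n i : ℝ) * Real.log (f u i) := by
    intro u; rw [hGdef]
  have hf0 : ∀ i, f 0 i = (n i : ℝ) / N := by
    intro i; rw [hfi]; ring
  have hG0 : G 0 = ∑ i ∈ S, (n i : ℝ) * Real.log ((n i : ℝ) / N) := by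
    rw [hGu]
    exact Finset.sum_congr rfl (fun i _ => by rw [hf0])
  have hφexp : ∀ u : ℝ, (∀ i ∈ S, 0 < f u i) →
      (∏ i ∈ S, f u i ^ n i) = Real.exp (G u) := by
    intro u hu
    rw [hGu, Real.exp_sum]
    refine Finset.prod_congr rfl (fun i hi => ?_)
    rw [Real.exp_nat_mul, Real.exp_log (hu i hi)]
  -- Key comparison with the value at 0
  have hA : ∀ u : ℝ, 0 < u → u ≤ 1 → (∀ i ∈ S, 0 < f u i) →
      G u ≤ G 0 ∧ ((∃ i, 0 < n i ∧ q i ≠ (n i : ℝ) / N) → G u < G 0) := by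
    intro u hu0 hu1 hupos
    have hterm : ∀ i ∈ S,
        (n i:ℝ) * Real.log (f u i) - (n i:ℝ) * Real.log ((n i:ℝ)/N)
          ≤ N * f u i - (n i:ℝ) := by
      intro i hi
      have hni : 0 < n i := (hmemS i).1 hi
      have hni' : (0:ℝ) < (n i : ℝ) := by exact_mod_cast hni
      have hp := hpi_pos i hi
      have hx : 0 < f u i / ((n i:ℝ)/N) := div_pos (hupos i hi) hp
      have hlog := Real.log_le_sub_one_of_pos hx
      have hlogdiv : Real.log (f u i / ((n i:ℝ)/N))
          = Real.log (f u i) - Real.log ((n i:ℝ)/N) :=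
        Real.log_div (hupos i hi).ne' hp.ne'
      rw [hlogdiv] at hlog
      calc (n i:ℝ) * Real.log (f u i) - (n i:ℝ) * Real.log ((n i:ℝ)/N)
          = (n i:ℝ) * (Real.log (f u i) - Real.log ((n i:ℝ)/N)) := by ring
        _ ≤ (n i:ℝ) * (f u i / ((n i:ℝ)/N) - 1) :=
            mul_le_mul_of_nonneg_left hlog hni'.le
        _ = N * f u i - (n i:ℝ) := by field_simp
    have hsum_f : ∑ i ∈ S, f u i = (1 - u) + u * (∑ i ∈ S, q i) := by
      simp only [hfi]
      rw [Finset.sum_add_distrib, ← Finset.mul_sum, ← Finset.mul_sum, hsum_pS, mul_one]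
    have hRHS : ∑ i ∈ S, (N * f u i - (n i:ℝ)) ≤ 0 := by
      rw [Finset.sum_sub_distrib, ← Finset.mul_sum, hsum_f, hnS]
      have hQ : (∑ i ∈ S, q i) ≤ 1 := hqS
      have hprod0 : (N * u) * ((∑ i ∈ S, q i) - 1) ≤ 0 :=
        mul_nonpos_of_nonneg_of_nonpos (mul_nonneg hNpos.le hu0.le) (by linarith)
      nlinarith [hprod0]
    have hdiff : G u - G 0
        = ∑ i ∈ S, ((n i:ℝ) * Real.log (f u i) - (n i:ℝ) * Real.log ((n i:ℝ)/N)) := by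
      rw [hGu, hG0, Finset.sum_sub_distrib]
    constructor
    · have := Finset.sum_le_sum hterm
      rw [← hdiff] at this
      linarith [hRHS]
    · rintro ⟨i₀, hi₀n, hi₀q⟩
      have hi₀S : i₀ ∈ S := (hmemS i₀).2 hi₀n
      have hterm₀ :
          (n i₀:ℝ) * Real.log (f u i₀) - (n i₀:ℝ) * Real.log ((n i₀:ℝ)/N)
            < N * f u i₀ - (n i₀:ℝ) := by
        have hni' : (0:ℝ) < (n i₀ : ℝ) := by exact_mod_cast hi₀n
        have hp := hpi_pos i₀ hi₀S
        have hx : 0 < f u i₀ / ((n i₀:ℝ)/N) := div_pos (hupos i₀ hi₀S) hp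
        have hne : f u i₀ ≠ (n i₀:ℝ)/N := by
          have hsub : f u i₀ - (n i₀:ℝ)/N = u * (q i₀ - (n i₀:ℝ)/N) := by
            rw [hfi]; ring
          intro h
          have h1 : u * (q i₀ - (n i₀:ℝ)/N) = 0 := by rw [← hsub, h]; ring
          rcases mul_eq_zero.mp h1 with h2 | h2
          · exact hu0.ne' h2
          · exact hi₀q (by linarith [sub_eq_zero.mp h2])
        have hxne : f u i₀ / ((n i₀:ℝ)/N) ≠ 1 := by
          intro h
          rw [div_eq_iff hp.ne', one_mul] at h
          exact hne h
        have hlog := Real.log_lt_sub_one_of_pos hx hxne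
        have hlogdiv : Real.log (f u i₀ / ((n i₀:ℝ)/N))
            = Real.log (f u i₀) - Real.log ((n i₀:ℝ)/N) :=
          Real.log_div (hupos i₀ hi₀S).ne' hp.ne'
        rw [hlogdiv] at hlog
        calc (n i₀:ℝ) * Real.log (f u i₀) - (n i₀:ℝ) * Real.log ((n i₀:ℝ)/N)
            = (n i₀:ℝ) * (Real.log (f u i₀) - Real.log ((n i₀:ℝ)/N)) := by ring
          _ < (n i₀:ℝ) * (f u i₀ / ((n i₀:ℝ)/N) - 1) :=
              (mul_lt_mul_iff_right₀ hni').2 hlog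
          _ = N * f u i₀ - (n i₀:ℝ) := by field_simp
      have hstrict := Finset.sum_lt_sum hterm ⟨i₀, hi₀S, hterm₀⟩
      rw [← hdiff] at hstrict
      linarith [hRHS]
  -- now fold the goal
  simp only [← hfi]
  rw [hprod t, hprod s]
  by_cases hft : ∀ i ∈ S, 0 < f t i
  · have hfs : ∀ i ∈ S, 0 < f s i := hfpos s hs0 hs1
    rw [hφexp t hft, hφexp s hfs]
    rcases eq_or_lt_of_le hs0 with hs0' | hs0'
    · rw [← hs0']
      have h := hA t ht0 ht1 hft
      exact ⟨Real.exp_le_exp.2 h.1, fun hw => Real.exp_lt_exp.2 (h.2 hw)⟩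
    · set l : ℝ := s / t with hl
      have hl0 : 0 < l := div_pos hs0' ht0
      have hl1 : l < 1 := (div_lt_one ht0).2 hst
      have hcomb : ∀ i, f s i = (1 - l) * ((n i:ℝ)/N) + l * f t i := by
        intro i
        rw [hfi, hfi, hl]
        field_simp
        ring
      have hlog_ge : ∀ i ∈ S,
          (1 - l) * Real.log ((n i:ℝ)/N) + l * Real.log (f t i) ≤ Real.log (f s i) := by
        intro i hi
        have hconc := strictConcaveOn_log_Ioi.concaveOn.2
          (Set.mem_Ioi.2 (hpi_pos i hi)) (Set.mem_Ioi.2 (hft i hi))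
          (by linarith : (0:ℝ) ≤ 1 - l) hl0.le (by ring)
        rw [hcomb i]
        simpa [smul_eq_mul] using hconc
      have hGs : (1 - l) * G 0 + l * G t ≤ G s := by
        rw [hG0, hGu t, hGu s, Finset.mul_sum, Finset.mul_sum, ← Finset.sum_add_distrib]
        refine Finset.sum_le_sum (fun i hi => ?_)
        have h1 := hlog_ge i hi
        have hn0 : (0:ℝ) ≤ (n i : ℝ) := Nat.cast_nonneg _
        calc (1 - l) * ((n i:ℝ) * Real.log ((n i:ℝ)/N)) + l * ((n i:ℝ) * Real.log (f t i))
            = (n i:ℝ) * ((1 - l) * Real.log ((n i:ℝ)/N) + l * Real.log (f t i)) := by ring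
          _ ≤ (n i:ℝ) * Real.log (f s i) := mul_le_mul_of_nonneg_left h1 hn0
      have h := hA t ht0 ht1 hft
      constructor
      · apply Real.exp_le_exp.2
        nlinarith [mul_le_mul_of_nonneg_left h.1 (by linarith : (0:ℝ) ≤ 1 - l)]
      · intro hw
        apply Real.exp_lt_exp.2
        nlinarith [(mul_lt_mul_iff_right₀ (by linarith : (0:ℝ) < 1 - l)).2 (h.2 hw)]
  · push_neg at hft
    obtain ⟨i₀, hi₀S, hi₀⟩ := hft
    have hzero : f t i₀ = 0 := le_antisymm hi₀ (hfnn t ht0.le ht1 i₀)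
    have hni₀ : 0 < n i₀ := (hmemS i₀).1 hi₀S
    have hzero' : (∏ i ∈ S, f t i ^ n i) = 0 :=
      Finset.prod_eq_zero hi₀S (by rw [hzero, zero_pow hni₀.ne'])
    have hpos : 0 < ∏ i ∈ S, f s i ^ n i :=
      Finset.prod_pos (fun i hi => pow_pos (hfpos s hs0 hs1 i hi) _)
    rw [hzero']
    exact ⟨hpos.le, fun _ => hpos⟩

/-- With `p̂ i = n i / N` the empirical distribution and `q` any
probability vector, the function `φ(t) = ∏ i, ((1−t)·p̂ i + t·q i)^(n i)` is
antitone on `[0,1]`; and if `q i ≠ p̂ i` for some `i` with `n i > 0`, then `φ`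
is strictly decreasing on `[0,1]`. -/
theorem stmt_1 (m : ℕ) (hm : 1 ≤ m) (n : Fin m → ℕ) (hN : 0 < ∑ i, n i)
    (q : Fin m → ℝ) (hq0 : ∀ i, 0 ≤ q i) (hq1 : (∑ i, q i) = 1) :
    AntitoneOn
      (fun t : ℝ => ∏ i, ((1 - t) * ((n i : ℝ) / ∑ j, (n j : ℝ)) + t * q i) ^ n i)
      (Set.Icc 0 1) ∧
    ((∃ i, 0 < n i ∧ q i ≠ (n i : ℝ) / ∑ j, (n j : ℝ)) →
      StrictAntiOn
        (fun t : ℝ => ∏ i, ((1 - t) * ((n i : ℝ) / ∑ j, (n j : ℝ)) + t * q i) ^ n i)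
        (Set.Icc 0 1)) := by
  constructor
  · intro a ha b hb hab
    rcases eq_or_lt_of_le hab with rfl | h
    · exact le_rfl
    · exact (stmt1_key m n hN q hq0 hq1 ha.1 hb.2 h).1
  · intro hw a ha b hb hab
    exact (stmt1_key m n hN q hq0 hq1 ha.1 hb.2 hab).2 hw
end

section
/- (Lemma 1 of the paper.) Let S be a nonempty finite set of states equipped with a linear order ≺ (the state generation order, SGO), and for each s ∈ S let n_s : Fin m → ℕ be counts with N_s = ∑ i, n_s i > 0. Suppose the SGO is respected by the data, i.e., for all s, s' ∈ S, s ≺ s' implies (max_i n_s i)/N_s ≥ (max_i n_{s'} i)/N_{s'}. Then the tuple of empirical distributions (p̂_s)_{s∈S}, given by p̂_s i = n_s i / N_s, maximizes the joint likelihood ∏_{s∈S} ∏_i (p_s i)^(n_s i) over all tuples (p_s)_{s∈S} of probability vectors on Fin m that satisfy the SGO constraint: s ≺ s' implies max_i p_s i ≥ max_i p_{s'} i. -/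
/-- Gibbs' inequality: the empirical distribution maximizes the likelihood. -/
lemma gibbs_aux {m : ℕ} (n : Fin m → ℕ) (hN : 0 < ∑ i, n i)
    (p : Fin m → ℝ) (hp : ∀ i, 0 ≤ p i) (hp1 : ∑ i, p i = 1) :
    ∏ i, p i ^ n i ≤ ∏ i, ((n i : ℝ) / ∑ j, (n j : ℝ)) ^ n i := by
  set N : ℝ := ∑ j, (n j : ℝ) with hNdef
  have hNpos : 0 < N := by
    have : (0 : ℝ) < ((∑ i, n i : ℕ) : ℝ) := by exact_mod_cast hN
    simpa [hNdef, Nat.cast_sum] using this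
  set w : Fin m → ℝ := fun i => (n i : ℝ) / N with hwdef
  set z : Fin m → ℝ := fun i => if n i = 0 then 0 else p i * N / (n i : ℝ) with hzdef
  have hw0 : ∀ i ∈ Finset.univ, 0 ≤ w i := fun i _ =>
    div_nonneg (Nat.cast_nonneg _) hNpos.le
  have hw1 : ∑ i, w i = 1 := by
    rw [hwdef]
    rw [← Finset.sum_div]
    exact div_self hNpos.ne'
  have hz0 : ∀ i ∈ Finset.univ, 0 ≤ z i := by
    intro i _
    rw [hzdef]
    dsimp only
    split
    · exact le_refl 0
    · exact div_nonneg (mul_nonneg (hp i) hNpos.le) (Nat.cast_nonneg _)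
  have hwz : ∀ i, w i * z i ≤ p i := by
    intro i
    rw [hwdef, hzdef]
    dsimp only
    by_cases h : n i = 0
    · simp [h]; exact hp i
    · have hni : (0:ℝ) < (n i : ℝ) := by exact_mod_cast Nat.pos_of_ne_zero h
      rw [if_neg h]
      have : (n i : ℝ) / N * (p i * N / (n i : ℝ)) = p i := by
        field_simp
      exact this.le
  have hgm := Real.geom_mean_le_arith_mean_weighted Finset.univ w z hw0 hw1 hz0
  have hsum : ∑ i, w i * z i ≤ 1 := by
    calc ∑ i, w i * z i ≤ ∑ i, p i := Finset.sum_le_sum fun i _ => hwz i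
    _ = 1 := hp1
  have hprod_le : ∏ i, z i ^ w i ≤ 1 := hgm.trans hsum
  have hprod_nonneg : 0 ≤ ∏ i, z i ^ w i :=
    Finset.prod_nonneg fun i _ => Real.rpow_nonneg (hz0 i (Finset.mem_univ i)) _
  -- raise to power N
  have hzn : ∏ i, z i ^ n i ≤ 1 := by
    have h1 : (∏ i, z i ^ w i) ^ N ≤ 1 ^ N := by
      exact Real.rpow_le_rpow hprod_nonneg hprod_le hNpos.le
    rw [Real.one_rpow] at h1
    calc ∏ i, z i ^ n i = (∏ i, z i ^ w i) ^ N := by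
          rw [← Real.finset_prod_rpow Finset.univ _ (fun i _ => Real.rpow_nonneg (hz0 i (Finset.mem_univ i)) _) N]
          refine Finset.prod_congr rfl fun i _ => ?_
          rw [← Real.rpow_natCast (z i) (n i), ← Real.rpow_mul (hz0 i (Finset.mem_univ i))]
          congr 1
          rw [hwdef]
          field_simp
      _ ≤ 1 := h1
  -- now pointwise equality: if p i ≤ w i * z i elsewhere... we need p i ^ n i = w i ^ n i * z i ^ n i
  have key : ∀ i, p i ^ n i ≤ w i ^ n i * z i ^ n i := by
    intro i
    by_cases h : n i = 0
    · simp [h]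
    · have : p i = w i * z i := by
        rw [hwdef, hzdef]; dsimp only; rw [if_neg h]
        have hni : (0:ℝ) < (n i : ℝ) := by exact_mod_cast Nat.pos_of_ne_zero h
        field_simp
      rw [this, mul_pow]
  calc ∏ i, p i ^ n i ≤ ∏ i, w i ^ n i * z i ^ n i := by
        refine Finset.prod_le_prod (fun i _ => pow_nonneg (hp i) _) fun i _ => key i
    _ = (∏ i, w i ^ n i) * ∏ i, z i ^ n i := Finset.prod_mul_distrib
    _ ≤ (∏ i, w i ^ n i) * 1 := by
        refine mul_le_mul_of_nonneg_left hzn ?_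
        exact Finset.prod_nonneg fun i _ => pow_nonneg (hw0 i (Finset.mem_univ i)) _
    _ = ∏ i, w i ^ n i := mul_one _

lemma isup_div {m : ℕ} (hm : 0 < m) (f : Fin m → ℕ) {N : ℝ} (hNpos : 0 < N) :
    (⨆ i, (f i : ℝ) / N) = ((Finset.univ.sup f : ℕ) : ℝ) / N := by
  haveI : Nonempty (Fin m) := ⟨⟨0, hm⟩⟩
  obtain ⟨i₀, _, hi₀⟩ := Finset.exists_mem_eq_sup Finset.univ Finset.univ_nonempty f
  apply le_antisymm
  · apply ciSup_le
    intro i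
    gcongr
    exact_mod_cast Finset.le_sup (Finset.mem_univ i)
  · rw [hi₀]
    exact le_ciSup (f := fun i => (f i : ℝ) / N) (Set.Finite.bddAbove (Set.finite_range _)) i₀

/-- Lemma 1 of the paper: If the SGO (a linear order on the
nonempty finite set `S` of states) is respected by the data, i.e. `s < s'`
implies `(max_i n_s i)/N_s ≥ (max_i n_{s'} i)/N_{s'}`, then the tuple of
empirical distributions `p̂_s i = n_s i / N_s` maximizes the joint likelihood
`∏ s, ∏ i, (p_s i)^(n_s i)` over all tuples of probability vectors satisfying
the SGO constraint `s < s' → max_i p_s i ≥ max_i p_{s'} i`. -/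
theorem stmt_2 {S : Type*} [Fintype S] [Nonempty S] [LinearOrder S]
    (m : ℕ) (hm : 0 < m)
    (n : S → Fin m → ℕ) (hN : ∀ s, 0 < ∑ i, n s i)
    (hresp : ∀ s s', s < s' →
      ((Finset.univ.sup (n s') : ℕ) : ℝ) / (∑ i, (n s' i : ℝ)) ≤
      ((Finset.univ.sup (n s) : ℕ) : ℝ) / (∑ i, (n s i : ℝ))) :
    ((∀ s s', s < s' →
        (⨆ i, (n s' i : ℝ) / ∑ j, (n s' j : ℝ)) ≤
        (⨆ i, (n s i : ℝ) / ∑ j, (n s j : ℝ))) ∧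
     (∀ s, (∀ i, 0 ≤ (n s i : ℝ) / ∑ j, (n s j : ℝ)) ∧
        (∑ i, (n s i : ℝ) / ∑ j, (n s j : ℝ)) = 1)) ∧
    ∀ p : S → Fin m → ℝ,
      (∀ s i, 0 ≤ p s i) → (∀ s, (∑ i, p s i) = 1) →
      (∀ s s', s < s' → (⨆ i, p s' i) ≤ (⨆ i, p s i)) →
      ∏ s, ∏ i, p s i ^ n s i ≤
        ∏ s, ∏ i, ((n s i : ℝ) / ∑ j, (n s j : ℝ)) ^ n s i := by
  have hNpos : ∀ s, (0:ℝ) < ∑ j, (n s j : ℝ) := by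
    intro s
    have : (0 : ℝ) < ((∑ i, n s i : ℕ) : ℝ) := by exact_mod_cast hN s
    simpa [Nat.cast_sum] using this
  refine ⟨⟨?_, ?_⟩, ?_⟩
  · intro s s' hss'
    rw [isup_div hm (n s) (hNpos s), isup_div hm (n s') (hNpos s')]
    exact hresp s s' hss'
  · intro s
    refine ⟨fun i => div_nonneg (Nat.cast_nonneg _) (hNpos s).le, ?_⟩
    rw [← Finset.sum_div]
    exact div_self (hNpos s).ne'
  · intro p hp hp1 _
    refine Finset.prod_le_prod (fun s _ => Finset.prod_nonneg fun i _ => pow_nonneg (hp s i) _)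
      fun s _ => gibbs_aux (n s) (hN s) (p s) (hp s) (hp1 s)
end

section
/- (Lemma 2 of the paper, unclipped case.) Let m ≥ 2, let n : Fin m → ℕ be counts, let i* ∈ Fin m be a distinguished index, let c ∈ (0,1] be the value fixed as the maximum generation probability, and set R = ∑_{j ≠ i*} n j with R > 0. Suppose that for every j ≠ i*, (n j / R)·(1 − c) ≤ c. Then among all probability vectors p on Fin m with p i* = c and p j ≤ c for all j, the likelihood ∏ j, (p j)^(n j) is maximized by the vector with p j = (n j / R)·(1 − c) for every j ≠ i*. -/
/-- The candidate maximizer of Lemma 2 (unclipped case): value `c` at the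
distinguished index `i*`, and `(n j / R)·(1 − c)` elsewhere, where
`R = ∑_{j ≠ i*} n j`. -/
noncomputable def lemma2Vec (m : ℕ) (n : Fin m → ℕ) (istar : Fin m) (c : ℝ) :
    Fin m → ℝ :=
  fun j => if j = istar then c
    else ((n j : ℝ) / ∑ k ∈ Finset.univ.erase istar, (n k : ℝ)) * (1 - c)

/-- Lemma 2 of the paper, unclipped case: if
`(n j / R)·(1 − c) ≤ c` for every `j ≠ i*`, then among probability vectors `p`
with `p i* = c` and `p j ≤ c` for all `j`, the likelihood `∏ j, (p j)^(n j)` is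
maximized by the vector with `p j = (n j / R)·(1 − c)` for `j ≠ i*`. -/
theorem stmt_3 (m : ℕ) (hm : 2 ≤ m) (n : Fin m → ℕ) (istar : Fin m)
    (c : ℝ) (hc0 : 0 < c) (hc1 : c ≤ 1)
    (hR : 0 < ∑ j ∈ Finset.univ.erase istar, n j)
    (hfeas : ∀ j, j ≠ istar →
      ((n j : ℝ) / ∑ k ∈ Finset.univ.erase istar, (n k : ℝ)) * (1 - c) ≤ c) :
    ((∀ j, 0 ≤ lemma2Vec m n istar c j) ∧
      (∑ j, lemma2Vec m n istar c j) = 1 ∧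
      lemma2Vec m n istar c istar = c ∧
      (∀ j, lemma2Vec m n istar c j ≤ c)) ∧
    ∀ p : Fin m → ℝ, (∀ j, 0 ≤ p j) → (∑ j, p j) = 1 →
      p istar = c → (∀ j, p j ≤ c) →
      ∏ j, p j ^ n j ≤ ∏ j, lemma2Vec m n istar c j ^ n j := by
  classical
  set S : Finset (Fin m) := Finset.univ.erase istar with hS
  set R : ℝ := ∑ k ∈ S, (n k : ℝ) with hRdef
  have hRpos : 0 < R := by
    have : (0:ℝ) < ((∑ j ∈ S, n j : ℕ) : ℝ) := by exact_mod_cast hR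
    simpa [hRdef, Nat.cast_sum] using this
  set q : Fin m → ℝ := lemma2Vec m n istar c with hq
  have hqdef : ∀ j, q j = if j = istar then c else ((n j : ℝ) / R) * (1 - c) := by
    intro j; rfl
  have hq0 : ∀ j, 0 ≤ q j := by
    intro j
    rw [hqdef]
    split
    · exact hc0.le
    · exact mul_nonneg (div_nonneg (Nat.cast_nonneg _) hRpos.le) (by linarith)
  have hsumS : ∑ j ∈ S, q j = 1 - c := by
    have h1 : ∀ j ∈ S, q j = ((n j : ℝ) / R) * (1 - c) := by
      intro j hj
      rw [hqdef, if_neg (Finset.ne_of_mem_erase hj)]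
    rw [Finset.sum_congr rfl h1, ← Finset.sum_mul, ← Finset.sum_div, ← hRdef,
      div_self hRpos.ne', one_mul]
  have hqsum : ∑ j, q j = 1 := by
    rw [← Finset.add_sum_erase _ _ (Finset.mem_univ istar), ← hS, hsumS,
      hqdef, if_pos rfl]
    ring
  have hqistar : q istar = c := by rw [hqdef, if_pos rfl]
  have hqle : ∀ j, q j ≤ c := by
    intro j
    rw [hqdef]
    split
    · exact le_rfl
    · exact hfeas j (by assumption)
  refine ⟨⟨hq0, hqsum, hqistar, hqle⟩, ?_⟩
  intro p hp0 hpsum hpistar hple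
  have hpS : ∑ j ∈ S, p j = 1 - c := by
    have := Finset.add_sum_erase Finset.univ p (Finset.mem_univ istar)
    rw [hpsum] at this
    rw [← hS] at this
    linarith [this, hpistar]
  -- reduce to the product over S
  rw [← Finset.prod_erase_mul Finset.univ _ (Finset.mem_univ istar),
    ← Finset.prod_erase_mul Finset.univ (fun j => q j ^ n j) (Finset.mem_univ istar),
    ← hS, hpistar, hqistar]
  have hprodq0 : 0 ≤ ∏ j ∈ S, q j ^ n j := Finset.prod_nonneg fun j _ => pow_nonneg (hq0 j) _
  have key : ∏ j ∈ S, p j ^ n j ≤ ∏ j ∈ S, q j ^ n j := by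
    rcases eq_or_lt_of_le hc1 with hc1' | hc1'
    · -- c = 1 : all p j = 0 on S, and some n j > 0
      obtain ⟨j0, hj0S, hj0⟩ : ∃ j ∈ S, 0 < n j := by
        by_contra h
        push_neg at h
        have : ∑ j ∈ S, n j = 0 := Finset.sum_eq_zero fun j hj => Nat.le_zero.mp (h j hj)
        omega
      have hpz : p j0 = 0 := by
        have hs0 : ∑ j ∈ S, p j = 0 := by rw [hpS]; linarith
        have := (Finset.sum_eq_zero_iff_of_nonneg (fun j _ => hp0 j)).mp hs0 j0 hj0S
        exact this
      have : ∏ j ∈ S, p j ^ n j = 0 :=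
        Finset.prod_eq_zero hj0S (by rw [hpz]; exact zero_pow hj0.ne')
      rw [this]; exact hprodq0
    · -- c < 1
      have h1c : 0 < 1 - c := by linarith
      set w : Fin m → ℝ := fun j => (n j : ℝ) / R with hw
      set z : Fin m → ℝ := fun j => if n j = 0 then 1 else p j / q j with hz
      have hz0 : ∀ j, 0 ≤ z j := by
        intro j
        rw [hz]
        dsimp only
        split
        · exact zero_le_one
        · exact div_nonneg (hp0 j) (hq0 j)
      have hqpos : ∀ j ∈ S, n j ≠ 0 → 0 < q j := by
        intro j hj hnj
        rw [hqdef, if_neg (Finset.ne_of_mem_erase hj)]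
        have : (0:ℝ) < (n j : ℝ) := by exact_mod_cast Nat.pos_of_ne_zero hnj
        positivity
      have hgm : ∏ j ∈ S, z j ^ w j ≤ ∑ j ∈ S, w j * z j := by
        apply Real.geom_mean_le_arith_mean_weighted
        · intro j _; exact div_nonneg (Nat.cast_nonneg _) hRpos.le
        · rw [hw, ← Finset.sum_div, ← hRdef, div_self hRpos.ne']
        · intro j _; exact hz0 j
      have hsum_le : ∑ j ∈ S, w j * z j ≤ 1 := by
        have hterm : ∀ j ∈ S, w j * z j ≤ p j / (1 - c) := by
          intro j hj
          rw [hw, hz]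
          dsimp only
          split
          · next h =>
            simp only [h, Nat.cast_zero, zero_div, zero_mul, mul_one]
            have := div_nonneg (hp0 j) h1c.le
            simpa [h] using this
          · next h =>
            have hnj : (0:ℝ) < (n j : ℝ) := by exact_mod_cast Nat.pos_of_ne_zero h
            rw [hqdef, if_neg (Finset.ne_of_mem_erase hj)]
            have heq : (n j : ℝ)/R * (p j / ((n j : ℝ)/R * (1-c))) = p j / (1-c) := by
              field_simp
            rw [heq]
        calc ∑ j ∈ S, w j * z j ≤ ∑ j ∈ S, p j / (1 - c) := Finset.sum_le_sum hterm
          _ = 1 := by rw [← Finset.sum_div, hpS, div_self h1c.ne']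
      have hzprod_le : ∏ j ∈ S, z j ^ (n j : ℝ) ≤ 1 := by
        have h1 : ∀ j ∈ S, z j ^ (n j : ℝ) = (z j ^ w j) ^ R := by
          intro j _
          rw [← Real.rpow_mul (hz0 j)]
          congr 1
          rw [hw]
          field_simp
        rw [Finset.prod_congr rfl h1,
          Real.finset_prod_rpow S _ (fun j _ => Real.rpow_nonneg (hz0 j) _)]
        exact Real.rpow_le_one (Finset.prod_nonneg fun j _ => Real.rpow_nonneg (hz0 j) _)
          (hgm.trans hsum_le) hRpos.le
      have hzn : ∏ j ∈ S, z j ^ n j ≤ 1 := by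
        have : ∀ j ∈ S, z j ^ (n j : ℝ) = z j ^ n j := fun j _ =>
          Real.rpow_natCast (z j) (n j)
        rwa [Finset.prod_congr rfl this] at hzprod_le
      have hfac : ∀ j ∈ S, p j ^ n j = z j ^ n j * q j ^ n j := by
        intro j hj
        rw [hz]
        dsimp only
        split
        · next h => simp [h]
        · next h =>
          have hqj := (hqpos j hj h).ne'
          rw [div_pow, div_mul_cancel₀]
          exact pow_ne_zero _ hqj
      calc ∏ j ∈ S, p j ^ n j = (∏ j ∈ S, z j ^ n j) * ∏ j ∈ S, q j ^ n j := by
            rw [← Finset.prod_mul_distrib]; exact Finset.prod_congr rfl hfac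
        _ ≤ 1 * ∏ j ∈ S, q j ^ n j := mul_le_mul_of_nonneg_right hzn hprodq0
        _ = _ := one_mul _
  calc (∏ j ∈ S, p j ^ n j) * c ^ n istar ≤ (∏ j ∈ S, q j ^ n j) * c ^ n istar := by
        apply mul_le_mul_of_nonneg_right key (pow_nonneg hc0.le _)
    _ = _ := rfl
end

section
/- (Lemma 2 of the paper, general clipped form.) Let m ≥ 2, let n : Fin m → ℕ be counts with n j > 0 for every j ≠ i*, where i* ∈ Fin m is a distinguished index, and let c ∈ (0,1] satisfy (m − 1)·c ≥ 1 − c (feasibility of the cap). Then there exists λ ≥ 0 such that the vector p defined by p i* = c and p j = min(c, λ · n j) for j ≠ i* satisfies ∑_{j ≠ i*} p j = 1 − c; and any such p maximizes the likelihood ∏ j, (p j)^(n j) over all probability vectors q on Fin m with q i* = c and q j ≤ c for all j. -/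
/-- Lemma 2 of the paper, general clipped form: with
`n j > 0` for every `j ≠ i*`, `c ∈ (0,1]`, and `(m − 1)·c ≥ 1 − c`, there
exists `λ ≥ 0` such that the vector `p` with `p i* = c` and
`p j = min(c, λ·n j)` for `j ≠ i*` satisfies `∑_{j ≠ i*} p j = 1 − c`; and any
such `p` maximizes `∏ j, (p j)^(n j)` over all probability vectors `q` with
`q i* = c` and `q j ≤ c` for all `j`. -/
theorem stmt_4 (m : ℕ) (hm : 2 ≤ m) (n : Fin m → ℕ) (istar : Fin m)
    (hn : ∀ j, j ≠ istar → 0 < n j)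
    (c : ℝ) (hc0 : 0 < c) (hc1 : c ≤ 1)
    (hcap : 1 - c ≤ ((m : ℝ) - 1) * c) :
    (∃ lam : ℝ, 0 ≤ lam ∧
      (∑ j ∈ Finset.univ.erase istar, min c (lam * (n j : ℝ))) = 1 - c) ∧
    ∀ lam : ℝ, 0 ≤ lam →
      (∑ j ∈ Finset.univ.erase istar, min c (lam * (n j : ℝ))) = 1 - c →
      ∀ q : Fin m → ℝ, (∀ j, 0 ≤ q j) → (∑ j, q j) = 1 →
        q istar = c → (∀ j, q j ≤ c) →
        ∏ j, q j ^ n j ≤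
          ∏ j, (if j = istar then c else min c (lam * (n j : ℝ))) ^ n j := by
  classical
  set S := Finset.univ.erase istar with hS
  have hcard : (S.card : ℝ) = (m : ℝ) - 1 := by
    have h1 : S.card = m - 1 := by
      simp [hS, Finset.card_erase_of_mem]
    rw [h1, Nat.cast_sub (by omega)]
    simp
  constructor
  · -- existence via IVT
    set f : ℝ → ℝ := fun lam => ∑ j ∈ S, min c (lam * (n j : ℝ)) with hf
    have hcont : ContinuousOn f (Set.Icc 0 c) := by
      apply Continuous.continuousOn
      apply continuous_finset_sum
      intro j _
      exact continuous_const.min (continuous_id.mul continuous_const)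
    have hf0 : f 0 = 0 := by
      simp [hf, min_eq_right hc0.le]
    have hfc : f c = (S.card : ℝ) * c := by
      rw [hf]
      simp only
      rw [Finset.sum_congr rfl (fun j hj => ?_), Finset.sum_const, nsmul_eq_mul]
      have hnj : (1 : ℝ) ≤ (n j : ℝ) := by
        exact_mod_cast (hn j (Finset.ne_of_mem_erase hj))
      exact min_eq_left (by nlinarith)
    have hmem : (1 - c) ∈ Set.Icc (f 0) (f c) := by
      rw [hf0, hfc, hcard]
      exact ⟨by linarith, hcap⟩
    obtain ⟨lam, hlam, hflam⟩ := intermediate_value_Icc hc0.le hcont hmem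
    exact ⟨lam, hlam.1, hflam⟩
  · intro lam hlam hsum q hq0 hq1 hqi hqc
    set p : Fin m → ℝ := fun j => if j = istar then c else min c (lam * (n j : ℝ)) with hp
    have hqS : ∑ j ∈ S, q j = 1 - c := by
      have h := Finset.sum_erase_add Finset.univ q (Finset.mem_univ istar)
      rw [hq1, hqi] at h
      rw [hS]
      linarith [h]
    -- reduce to p-form of product
    have hrhs : ∏ j, (if j = istar then c else min c (lam * (n j : ℝ))) ^ n j
        = ∏ j, p j ^ n j := rfl
    rw [hrhs]
    rcases eq_or_lt_of_le hlam with hlam0 | hlampos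
    · -- lam = 0 : forces c = 1 and q = p
      have hc1' : c = 1 := by
        have : ∑ j ∈ S, min c (lam * (n j : ℝ)) = 0 := by
          rw [Finset.sum_congr rfl (fun j _ => ?_)]
          · exact Finset.sum_const_zero
          · rw [← hlam0]; simp [min_eq_right hc0.le]
        rw [this] at hsum; linarith
      have hqz : ∀ j ∈ S, q j = 0 := by
        intro j hj
        have hsz : ∑ j ∈ S, q j = 0 := by rw [hqS, hc1']; ring
        have := (Finset.sum_eq_zero_iff_of_nonneg (fun i _ => hq0 i)).mp hsz
        exact this j hj
      have : ∀ j, q j = p j := by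
        intro j
        by_cases hji : j = istar
        · simp [hp, hji, hqi]
        · have : j ∈ S := by simp [hS, hji]
          rw [hqz j this, hp]
          simp [hji, ← hlam0, min_eq_right hc0.le]
      exact le_of_eq (by rw [Finset.prod_congr rfl (fun j _ => by rw [this j])])
    · -- lam > 0
      have hppos : ∀ j, 0 < p j := by
        intro j
        by_cases hji : j = istar
        · simp [hp, hji, hc0]
        · have hnj : (0 : ℝ) < (n j : ℝ) := by exact_mod_cast hn j hji
          simp only [hp, if_neg hji]
          exact lt_min hc0 (by positivity)
      by_cases hqz : ∃ j, q j = 0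
      · obtain ⟨j, hj⟩ := hqz
        have hji : j ≠ istar := by
          intro h; rw [h, hqi] at hj; linarith
        have hlhs : ∏ j, q j ^ n j = 0 := by
          apply Finset.prod_eq_zero (Finset.mem_univ j)
          rw [hj]
          exact zero_pow (hn j hji).ne'
        rw [hlhs]
        exact Finset.prod_nonneg fun j _ => pow_nonneg (hppos j).le (n j)
      · push_neg at hqz
        have hqpos : ∀ j, 0 < q j := fun j => (hq0 j).lt_of_ne' (hqz j)
        -- key log inequality
        have hterm : ∀ j ∈ S, (n j : ℝ) * (Real.log (q j) - Real.log (p j))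
            ≤ lam⁻¹ * (q j - p j) := by
          intro j hj
          have hji : j ≠ istar := Finset.ne_of_mem_erase hj
          have hnj : (0 : ℝ) < (n j : ℝ) := by exact_mod_cast hn j hji
          have hlog : Real.log (q j) - Real.log (p j) ≤ (q j - p j) / p j := by
            have hd := Real.log_le_sub_one_of_pos (div_pos (hqpos j) (hppos j))
            rw [Real.log_div (hqz j) (hppos j).ne'] at hd
            have : q j / p j - 1 = (q j - p j) / p j := by
              rw [sub_div, div_self (hppos j).ne']
            linarith [hd, this.symm.le]
          have h1 : (n j : ℝ) * (Real.log (q j) - Real.log (p j))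
              ≤ (n j : ℝ) * ((q j - p j) / p j) := by
            exact mul_le_mul_of_nonneg_left hlog hnj.le
          refine h1.trans ?_
          have hpj : p j = min c (lam * (n j : ℝ)) := by simp [hp, hji]
          rcases le_or_gt (lam * (n j : ℝ)) c with hcase | hcase
          · -- p j = lam * n j
            rw [hpj, min_eq_right hcase, ← mul_div_assoc, inv_mul_eq_div,
              div_le_div_iff₀ (mul_pos hlampos hnj) hlampos]
            have : (n j : ℝ) * (q j - lam * (n j : ℝ)) * lam
                = (q j - lam * (n j : ℝ)) * (lam * (n j : ℝ)) := by ring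
            linarith [this]
          · -- p j = c, q j ≤ c
            rw [hpj, min_eq_left hcase.le, ← mul_div_assoc, inv_mul_eq_div,
              div_le_div_iff₀ hc0 hlampos]
            have hqc' : 0 ≤ c - q j := by linarith [hqc j]
            nlinarith [mul_nonneg hqc' (le_of_lt (by linarith : 0 < lam * (n j : ℝ) - c))]
        have hkey : ∑ j, (n j : ℝ) * Real.log (q j) ≤ ∑ j, (n j : ℝ) * Real.log (p j) := by
          have hsplit : ∀ g : Fin m → ℝ, ∑ j, g j = ∑ j ∈ S, g j + g istar :=
            fun g => (Finset.sum_erase_add Finset.univ g (Finset.mem_univ istar)).symm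
          rw [hsplit, hsplit (fun j => (n j : ℝ) * Real.log (p j))]
          have histar : q istar = p istar := by simp [hp, hqi]
          rw [histar]
          have hsum2 : ∑ j ∈ S, ((n j : ℝ) * Real.log (q j) - (n j : ℝ) * Real.log (p j))
              ≤ ∑ j ∈ S, lam⁻¹ * (q j - p j) := by
            apply Finset.sum_le_sum
            intro j hj
            have := hterm j hj
            linarith [this]
          rw [Finset.sum_sub_distrib] at hsum2
          have hz : ∑ j ∈ S, lam⁻¹ * (q j - p j) = 0 := by
            rw [← Finset.mul_sum, Finset.sum_sub_distrib, hqS]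
            have hpS : ∑ j ∈ S, p j = 1 - c := by
              rw [← hsum]
              apply Finset.sum_congr rfl
              intro j hj
              simp [hp, Finset.ne_of_mem_erase hj]
            rw [hpS]; ring
          rw [hz] at hsum2
          linarith
        -- exponentiate
        have hlq : Real.log (∏ j, q j ^ n j) = ∑ j, (n j : ℝ) * Real.log (q j) := by
          rw [Real.log_prod (fun j _ => pow_ne_zero _ (hqz j))]
          exact Finset.sum_congr rfl fun j _ => Real.log_pow _ _
        have hlp : Real.log (∏ j, p j ^ n j) = ∑ j, (n j : ℝ) * Real.log (p j) := by
          rw [Real.log_prod (fun j _ => pow_ne_zero _ (hppos j).ne')]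
          exact Finset.sum_congr rfl fun j _ => Real.log_pow _ _
        have hQpos : 0 < ∏ j, q j ^ n j :=
          Finset.prod_pos fun j _ => pow_pos (hqpos j) _
        have hPpos : 0 < ∏ j, p j ^ n j :=
          Finset.prod_pos fun j _ => pow_pos (hppos j) _
        exact (Real.log_le_log_iff hQpos hPpos).mp (by rw [hlq, hlp]; exact hkey)
end

section
/- (Ordering property of constrained maximizers, used in the proof of Lemma 2.) Let m ≥ 1, let n : Fin m → ℕ be counts, let S ∈ (0, ∞) and c ∈ (0, ∞) with S ≤ m·c, and let p maximize ∏ j, (p j)^(n j) over the set { p : Fin m → ℝ | 0 ≤ p j ≤ c for all j, and ∑ j, p j = S }. Then p respects the order of the counts: for all indices j, k, if n j > n k then p j ≥ p k. -/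
/-!
Exchanging the values of a maximizer at `j` and `k` keeps the vector feasible. If `n k < n j` but
`p j < p k`, the exchange strictly increases the likelihood by the two-term rearrangement inequality
`a ^ n * b ^ m < b ^ n * a ^ m` for `0 < a < b`, `m < n`. This needs the maximal likelihood to be
positive, which the uniform vector `S / m` witnesses.
-/

open Finset Equiv

section Rearrangement

variable {R : Type*} [CommRing R] [LinearOrder R] [IsStrictOrderedRing R]

theorem pow_mul_pow_lt_pow_mul_pow {a b : R} (ha : 0 < a) (hab : a < b) {m n : ℕ} (hmn : m < n) :
    a ^ n * b ^ m < b ^ n * a ^ m := by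
  obtain ⟨d, rfl⟩ := Nat.exists_eq_add_of_lt hmn
  have hab_pos : 0 < (a * b) ^ m := pow_pos (mul_pos ha (ha.trans hab)) m
  calc a ^ (m + d + 1) * b ^ m = (a * b) ^ m * a ^ (d + 1) := by ring
    _ < (a * b) ^ m * b ^ (d + 1) :=
      mul_lt_mul_of_pos_left (pow_lt_pow_left₀ hab ha.le d.succ_ne_zero) hab_pos
    _ = b ^ (m + d + 1) * a ^ m := by ring

theorem prod_pow_lt_prod_pow_comp_swap {ι : Type*} [Fintype ι] [DecidableEq ι]
    {f : ι → R} {n : ι → ℕ} {j k : ι} (hf : ∀ i, 0 ≤ f i) (hpos : 0 < ∏ i, f i ^ n i)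
    (hn : n k < n j) (hlt : f j < f k) :
    ∏ i, f i ^ n i < ∏ i, f (swap j k i) ^ n i := by
  have hjk : j ≠ k := by rintro rfl; exact hn.false
  have hsplit (g : ι → R) :
      ∏ i, g i ^ n i = g j ^ n j * g k ^ n k * ∏ i ∈ {j, k}ᶜ, g i ^ n i := by
    rw [← prod_mul_prod_compl {j, k}, prod_pair hjk]
  have hrest : ∏ i ∈ {j, k}ᶜ, f (swap j k i) ^ n i = ∏ i ∈ {j, k}ᶜ, f i ^ n i := by
    refine prod_congr rfl fun i hi => ?_
    simp only [mem_compl, mem_insert, mem_singleton, not_or] at hi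
    rw [swap_apply_of_ne_of_ne hi.1 hi.2]
  rw [hsplit f] at hpos ⊢
  rw [hsplit (fun i => f (swap j k i)), swap_apply_left, swap_apply_right, hrest]
  have hfj : 0 < f j := by
    refine (hf j).lt_of_ne fun h => hpos.ne' ?_
    rw [← h, zero_pow (by omega)]
    ring
  have hrest_pos : 0 < ∏ i ∈ {j, k}ᶜ, f i ^ n i :=
    pos_of_mul_pos_right hpos (mul_nonneg (pow_nonneg (hf j) _) (pow_nonneg (hf k) _))
  exact mul_lt_mul_of_pos_right (pow_mul_pow_lt_pow_mul_pow hfj hlt hn) hrest_pos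

end Rearrangement

theorem stmt_5_general (m : ℕ) (n : Fin m → ℕ) (S c : ℝ)
    (hS : 0 < S) (hSc : S ≤ (m : ℝ) * c)
    (p : Fin m → ℝ)
    (hp0 : ∀ j, 0 ≤ p j) (hpc : ∀ j, p j ≤ c) (hpS : (∑ j, p j) = S)
    (hmax : ∀ q : Fin m → ℝ, (∀ j, 0 ≤ q j) → (∀ j, q j ≤ c) →
      (∑ j, q j) = S → ∏ j, q j ^ n j ≤ ∏ j, p j ^ n j) :
    ∀ j k, n k < n j → p k ≤ p j := by
  intro j k hn
  by_contra! hlt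
  have hm : (0 : ℝ) < m := Nat.cast_pos.mpr j.pos
  have huniform : ∏ i : Fin m, (S / m) ^ n i ≤ ∏ i, p i ^ n i :=
    hmax _ (fun _ => (div_pos hS hm).le) (fun _ => by rw [div_le_iff₀ hm]; linarith)
      (by simp [field])
  have hpos : 0 < ∏ i, p i ^ n i :=
    (prod_pos fun i _ => pow_pos (div_pos hS hm) (n i)).trans_le huniform
  have hswap := hmax (fun i => p (swap j k i)) (fun _ => hp0 _) (fun _ => hpc _)
    (by rw [← hpS]; exact Equiv.sum_comp (swap j k) p)
  exact (prod_pow_lt_prod_pow_comp_swap hp0 hpos hn hlt).not_ge hswap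

/-- ordering property of constrained maximizers: if `p`
maximizes `∏ j, (p j)^(n j)` over all vectors with `0 ≤ p j ≤ c` and
`∑ j, p j = S` (where `0 < S ≤ m·c` and `c > 0`), then `p` respects the order
of the counts: `n j > n k` implies `p j ≥ p k`. -/
theorem stmt_5 (m : ℕ) (hm : 1 ≤ m) (n : Fin m → ℕ) (S c : ℝ)
    (hS : 0 < S) (hc : 0 < c) (hSc : S ≤ (m : ℝ) * c)
    (p : Fin m → ℝ)
    (hp0 : ∀ j, 0 ≤ p j) (hpc : ∀ j, p j ≤ c) (hpS : (∑ j, p j) = S)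
    (hmax : ∀ q : Fin m → ℝ, (∀ j, 0 ≤ q j) → (∀ j, q j ≤ c) →
      (∑ j, q j) = S → ∏ j, q j ^ n j ≤ ∏ j, p j ^ n j) :
    ∀ j k, n k < n j → p k ≤ p j :=
  stmt_5_general m n S c hS hSc p hp0 hpc hpS hmax
end

section
/- (Lemma 3 of the paper.) Let m ≥ 2, let a, b : Fin m → ℕ be counts with A = ∑ i, a i > 0 and B = ∑ j, b j > 0, and suppose the misalignment condition holds: (max_i a i)/A < (max_j b j)/B. Then every pair (p, q) of probability vectors on Fin m that maximizes the joint likelihood (∏ i, (p i)^(a i))·(∏ j, (q j)^(b j)) subject to the constraint max_i p i ≥ max_j q j satisfies max_i p i = max_j q j. -/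
open Finset

private lemma rpow_pow_comm {u : ℝ} (hu : 0 ≤ u) (r : ℝ) (n : ℕ) :
    (u ^ r) ^ n = (u ^ n) ^ r := by
  rw [← Real.rpow_natCast (u ^ r) n, ← Real.rpow_mul hu, mul_comm, Real.rpow_mul hu,
    Real.rpow_natCast]

private lemma sqrt_le_half_add {u v : ℝ} (hu : 0 ≤ u) (hv : 0 ≤ v) :
    Real.sqrt (u * v) ≤ (u + v) / 2 := by
  rw [Real.sqrt_mul hu]
  nlinarith [sq_nonneg (Real.sqrt u - Real.sqrt v), Real.sq_sqrt hu, Real.sq_sqrt hv,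
    Real.sqrt_nonneg u, Real.sqrt_nonneg v]

private lemma sqrt_lt_half_add {u v : ℝ} (hu : 0 ≤ u) (hv : 0 ≤ v) (hne : u ≠ v) :
    Real.sqrt (u * v) < (u + v) / 2 := by
  have h1 : Real.sqrt u ≠ Real.sqrt v := fun h => hne (by
    have := congrArg (fun t => t ^ 2) h
    simpa [Real.sq_sqrt hu, Real.sq_sqrt hv] using this)
  have h1' : Real.sqrt u - Real.sqrt v ≠ 0 := sub_ne_zero.mpr h1
  have h2 : 0 < (Real.sqrt u - Real.sqrt v) ^ 2 := by
    first
      | exact pow_two_pos_of_ne_zero _ h1'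
      | exact pow_two_pos_of_ne_zero h1'
  rw [Real.sqrt_mul hu]
  nlinarith [Real.sq_sqrt hu, Real.sq_sqrt hv]

private lemma gibbs_le {m : ℕ} (c : Fin m → ℕ) (hC : 0 < ∑ k, (c k : ℝ)) (x : Fin m → ℝ)
    (hx0 : ∀ i, 0 ≤ x i) (hx1 : ∑ i, x i = 1) :
    ∏ i, x i ^ c i ≤ ∏ i, ((c i : ℝ) / (∑ k, (c k : ℝ))) ^ c i := by
  set C : ℝ := ∑ k, (c k : ℝ) with hCdef
  have hCne : C ≠ 0 := ne_of_gt hC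
  set z : Fin m → ℝ := fun i => if c i = 0 then 0 else x i * C / (c i : ℝ) with hzdef
  have hz0 : ∀ i, 0 ≤ z i := by
    intro i
    by_cases h : c i = 0
    · simp [hzdef, h]
    · simp only [hzdef, h, if_false]
      exact div_nonneg (mul_nonneg (hx0 i) hC.le) (Nat.cast_nonneg _)
  have hw0 : ∀ i ∈ univ, 0 ≤ (c i : ℝ) / C :=
    fun i _ => div_nonneg (Nat.cast_nonneg _) hC.le
  have hw1 : ∑ i, (c i : ℝ) / C = 1 := by rw [← Finset.sum_div]; exact div_self hCne
  have hgm := Real.geom_mean_le_arith_mean_weighted univ (fun i => (c i : ℝ) / C) z hw0 hw1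
    (fun i _ => hz0 i)
  have hsum : ∑ i, ((c i : ℝ) / C) * z i ≤ 1 := by
    rw [← hx1]
    apply Finset.sum_le_sum
    intro i _
    by_cases h : c i = 0
    · simp only [hzdef, h, if_true]
      simpa using hx0 i
    · have hci : (c i : ℝ) ≠ 0 := Nat.cast_ne_zero.mpr h
      simp only [hzdef, h, if_false]
      refine le_of_eq ?_
      field_simp
      try ring
  have hP0 : 0 ≤ ∏ i, z i ^ ((c i : ℝ) / C) :=
    Finset.prod_nonneg fun i _ => Real.rpow_nonneg (hz0 i) _
  have hP1 : ∏ i, z i ^ ((c i : ℝ) / C) ≤ 1 := le_trans hgm hsum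
  have hzc : ∏ i, z i ^ c i ≤ 1 := by
    have hpow : (∏ i, z i ^ ((c i : ℝ) / C)) ^ C = ∏ i, z i ^ c i := by
      rw [← Real.finset_prod_rpow univ _ (fun i _ => Real.rpow_nonneg (hz0 i) _) C]
      apply Finset.prod_congr rfl
      intro i _
      rw [← Real.rpow_mul (hz0 i), div_mul_cancel₀ _ hCne, Real.rpow_natCast]
    rw [← hpow]
    exact Real.rpow_le_one hP0 hP1 hC.le
  have hfac : ∀ i, x i ^ c i = z i ^ c i * ((c i : ℝ) / C) ^ c i := by
    intro i
    by_cases h : c i = 0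
    · simp [h]
    · have hci : (c i : ℝ) ≠ 0 := Nat.cast_ne_zero.mpr h
      rw [← mul_pow]
      congr 1
      simp only [hzdef, h, if_false]
      field_simp
  calc ∏ i, x i ^ c i = (∏ i, z i ^ c i) * ∏ i, ((c i : ℝ) / C) ^ c i := by
        rw [← Finset.prod_mul_distrib]; exact Finset.prod_congr rfl fun i _ => hfac i
    _ ≤ 1 * ∏ i, ((c i : ℝ) / C) ^ c i := by
        apply mul_le_mul_of_nonneg_right hzc
        exact Finset.prod_nonneg fun i _ =>
          pow_nonneg (div_nonneg (Nat.cast_nonneg _) hC.le) _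
    _ = ∏ i, ((c i : ℝ) / C) ^ c i := one_mul _

private lemma gibbs_eq {m : ℕ} (c : Fin m → ℕ) (hC : 0 < ∑ k, (c k : ℝ)) (x : Fin m → ℝ)
    (hx0 : ∀ i, 0 ≤ x i) (hx1 : ∑ i, x i = 1)
    (heq : ∏ i, x i ^ c i = ∏ i, ((c i : ℝ) / (∑ k, (c k : ℝ))) ^ c i) :
    ∀ i, x i = (c i : ℝ) / (∑ k, (c k : ℝ)) := by
  set C : ℝ := ∑ k, (c k : ℝ) with hCdef
  have hCne : C ≠ 0 := ne_of_gt hC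
  have hcdiv0 : ∀ i, (0:ℝ) ≤ (c i : ℝ) / C :=
    fun i => div_nonneg (Nat.cast_nonneg _) hC.le
  have hG : 0 < ∏ i, ((c i : ℝ) / C) ^ c i := by
    apply Finset.prod_pos
    intro i _
    by_cases h : c i = 0
    · simp [h]
    · have hci : (0:ℝ) < (c i : ℝ) := by exact_mod_cast Nat.pos_of_ne_zero h
      exact pow_pos (div_pos hci hC) _
  have hL : 0 < ∏ i, x i ^ c i := heq ▸ hG
  have hxpos : ∀ i, c i ≠ 0 → 0 < x i := by
    intro i hi
    rcases lt_or_eq_of_le (hx0 i) with h | h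
    · exact h
    · exfalso
      have : ∏ j, x j ^ c j = 0 := Finset.prod_eq_zero (Finset.mem_univ i)
        (by rw [← h, zero_pow hi])
      rw [this] at hL; exact lt_irrefl _ hL
  have hsumc : ∑ i, (c i : ℝ) / C = 1 := by rw [← Finset.sum_div]; exact div_self hCne
  have stepA : ∀ i, c i ≠ 0 → x i = (c i : ℝ) / C := by
    by_contra hcon
    push_neg at hcon
    obtain ⟨k, hk, hkne⟩ := hcon
    set y : Fin m → ℝ := fun i => (x i + (c i : ℝ) / C) / 2 with hydef
    have hy0 : ∀ i, 0 ≤ y i := by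
      intro i
      have h1 := hx0 i
      have h2 := hcdiv0 i
      simp only [hydef]
      linarith
    have hy1 : ∑ i, y i = 1 := by
      simp only [hydef]
      rw [← Finset.sum_div, Finset.sum_add_distrib, hx1, hsumc]
      norm_num
    set f : Fin m → ℝ := fun i => Real.sqrt (x i * ((c i : ℝ) / C)) ^ c i with hfdef
    have hf_pos : ∀ i ∈ univ, 0 < f i := by
      intro i _
      simp only [hfdef]
      by_cases h : c i = 0
      · simp [h]
      · have h1 : 0 < x i := hxpos i h
        have h2 : (0:ℝ) < (c i : ℝ) := by exact_mod_cast Nat.pos_of_ne_zero h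
        exact pow_pos (Real.sqrt_pos.mpr (mul_pos h1 (div_pos h2 hC))) _
    have hf_le : ∀ i ∈ univ, f i ≤ y i ^ c i := by
      intro i _
      simp only [hfdef, hydef]
      exact pow_le_pow_left₀ (Real.sqrt_nonneg _)
        (sqrt_le_half_add (hx0 i) (hcdiv0 i)) _
    have hf_lt : ∃ i ∈ univ, f i < y i ^ c i := by
      refine ⟨k, Finset.mem_univ k, ?_⟩
      simp only [hfdef, hydef]
      apply pow_lt_pow_left₀ _ (Real.sqrt_nonneg _) hk
      exact sqrt_lt_half_add (hx0 k) (hcdiv0 k) hkne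
    have hprod_lt : ∏ i, f i < ∏ i, y i ^ c i := Finset.prod_lt_prod hf_pos hf_le hf_lt
    have hfG : ∏ i, f i = ∏ i, ((c i : ℝ) / C) ^ c i := by
      have hsq : (∏ i, f i) ^ 2 = (∏ i, ((c i : ℝ) / C) ^ c i) ^ 2 := by
        rw [← Finset.prod_pow]
        have he : ∀ i ∈ univ, f i ^ 2 = x i ^ c i * ((c i : ℝ) / C) ^ c i := by
          intro i _
          simp only [hfdef]
          rw [← pow_mul, mul_comm (c i) 2, pow_mul,
            Real.sq_sqrt (mul_nonneg (hx0 i) (hcdiv0 i)), mul_pow]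
        rw [Finset.prod_congr rfl he, Finset.prod_mul_distrib, heq, sq]
      have h1 : 0 ≤ ∏ i, f i := Finset.prod_nonneg fun i hi => (hf_pos i hi).le
      calc ∏ i, f i = Real.sqrt ((∏ i, f i) ^ 2) := (Real.sqrt_sq h1).symm
        _ = Real.sqrt ((∏ i, ((c i : ℝ) / C) ^ c i) ^ 2) := by rw [hsq]
        _ = ∏ i, ((c i : ℝ) / C) ^ c i := Real.sqrt_sq hG.le
    have hyle : ∏ i, y i ^ c i ≤ ∏ i, ((c i : ℝ) / C) ^ c i := gibbs_le c hC y hy0 hy1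
    rw [hfG] at hprod_lt
    exact absurd (lt_of_lt_of_le hprod_lt hyle) (lt_irrefl _)
  intro i
  by_cases h : c i = 0
  · have hsup : ∑ j ∈ univ.filter (fun j => c j ≠ 0), x j = 1 := by
      have e1 : ∑ j ∈ univ.filter (fun j => c j ≠ 0), x j
          = ∑ j ∈ univ.filter (fun j => c j ≠ 0), (c j : ℝ) / C :=
        Finset.sum_congr rfl fun j hj => stepA j (Finset.mem_filter.mp hj).2
      have e2 : ∑ j ∈ univ.filter (fun j => c j ≠ 0), (c j : ℝ) / C = ∑ j, (c j : ℝ) / C := by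
        apply Finset.sum_subset (Finset.filter_subset _ _)
        intro j _ hj
        simp only [Finset.mem_filter, Finset.mem_univ, true_and, not_not] at hj
        simp [hj]
      rw [e1, e2, hsumc]
    have hsplit := Finset.sum_filter_add_sum_filter_not univ (fun j => c j ≠ 0) x
    rw [hx1, hsup] at hsplit
    have hzero : ∑ j ∈ univ.filter (fun j => ¬ c j ≠ 0), x j = 0 := by linarith
    have hxi : x i = 0 := by
      have hmem : i ∈ univ.filter (fun j => ¬ c j ≠ 0) := by simp [h]
      exact (Finset.sum_eq_zero_iff_of_nonneg
        (fun j _ => hx0 j)).mp hzero i hmem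
    rw [hxi, h]; simp
  · exact stepA i h

private lemma perturb {m : ℕ} (c : Fin m → ℕ) (hC : 0 < ∑ k, (c k : ℝ)) (x : Fin m → ℝ)
    (hx0 : ∀ i, 0 ≤ x i) (hx1 : ∑ i, x i = 1) (hL : 0 < ∏ i, x i ^ c i)
    {ε : ℝ} (hε0 : 0 < ε) (hε1 : ε < 1)
    (hle : ∏ i, ((1 - ε) * x i + ε * ((c i : ℝ) / (∑ k, (c k : ℝ)))) ^ c i ≤ ∏ i, x i ^ c i) :
    ∀ i, x i = (c i : ℝ) / (∑ k, (c k : ℝ)) := by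
  set C : ℝ := ∑ k, (c k : ℝ) with hCdef
  have hcdiv0 : ∀ i, (0:ℝ) ≤ (c i : ℝ) / C :=
    fun i => div_nonneg (Nat.cast_nonneg _) hC.le
  set G : ℝ := ∏ i, ((c i : ℝ) / C) ^ c i with hGdef
  set L : ℝ := ∏ i, x i ^ c i with hLdef
  have hkey : L ^ (1 - ε) * G ^ ε ≤ L := by
    have hptw : ∀ i ∈ univ,
        (x i ^ c i) ^ (1 - ε) * (((c i : ℝ) / C) ^ c i) ^ ε
          ≤ ((1 - ε) * x i + ε * ((c i : ℝ) / C)) ^ c i := by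
      intro i _
      have hgm2 : x i ^ (1 - ε) * ((c i : ℝ) / C) ^ ε
          ≤ (1 - ε) * x i + ε * ((c i : ℝ) / C) :=
        Real.geom_mean_le_arith_mean2_weighted (by linarith) hε0.le (hx0 i) (hcdiv0 i)
          (by ring)
      have hlift := pow_le_pow_left₀ (mul_nonneg (Real.rpow_nonneg (hx0 i) _)
        (Real.rpow_nonneg (hcdiv0 i) _)) hgm2 (c i)
      calc (x i ^ c i) ^ (1 - ε) * (((c i : ℝ) / C) ^ c i) ^ ε
          = (x i ^ (1 - ε) * ((c i : ℝ) / C) ^ ε) ^ c i := by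
            rw [mul_pow, rpow_pow_comm (hx0 i), rpow_pow_comm (hcdiv0 i)]
        _ ≤ _ := hlift
    calc L ^ (1 - ε) * G ^ ε
        = ∏ i, ((x i ^ c i) ^ (1 - ε) * (((c i : ℝ) / C) ^ c i) ^ ε) := by
          rw [Finset.prod_mul_distrib,
            Real.finset_prod_rpow univ _ (fun i _ => pow_nonneg (hx0 i) _) _,
            Real.finset_prod_rpow univ _ (fun i _ => pow_nonneg (hcdiv0 i) _) _]
      _ ≤ ∏ i, ((1 - ε) * x i + ε * ((c i : ℝ) / C)) ^ c i :=
          Finset.prod_le_prod (fun i _ => mul_nonneg (Real.rpow_nonneg (pow_nonneg (hx0 i) _) _)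
            (Real.rpow_nonneg (pow_nonneg (hcdiv0 i) _) _)) hptw
      _ ≤ L := hle
  have hGL : G ≤ L := by
    by_contra hcon
    push_neg at hcon
    have h1 : L ^ ε < G ^ ε := Real.rpow_lt_rpow hL.le hcon hε0
    have h2 : L ^ (1 - ε) * L ^ ε < L ^ (1 - ε) * G ^ ε :=
      mul_lt_mul_of_pos_left h1 (Real.rpow_pos_of_pos hL _)
    have h3 : L ^ (1 - ε) * L ^ ε = L := by
      rw [← Real.rpow_add hL]
      norm_num
    rw [h3] at h2
    exact absurd (lt_of_lt_of_le h2 hkey) (lt_irrefl _)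
  have hLG : L = G := le_antisymm (gibbs_le c hC x hx0 hx1) hGL
  exact gibbs_eq c hC x hx0 hx1 hLG

private lemma fin_sup_eq {m : ℕ} (hm : 0 < m) (f : Fin m → ℝ) :
    ∃ i0, (∀ i, f i ≤ f i0) ∧ (⨆ i, f i) = f i0 := by
  have : Nonempty (Fin m) := Fin.pos_iff_nonempty.mp hm
  obtain ⟨i0, hi0⟩ := Finite.exists_max f
  exact ⟨i0, hi0, le_antisymm (ciSup_le hi0) (le_ciSup (Set.finite_range f).bddAbove i0)⟩

set_option maxHeartbeats 1000000 in
/-- Lemma 3 of the paper: with counts `a, b` having positive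
totals `A, B` and satisfying the misalignment condition
`(max_i a i)/A < (max_j b j)/B`, every pair `(p, q)` of probability vectors
maximizing the joint likelihood `(∏ i, (p i)^(a i))·(∏ j, (q j)^(b j))`
subject to `max_i p i ≥ max_j q j` satisfies `max_i p i = max_j q j`. -/

theorem stmt_7 (m : ℕ) (hm : 2 ≤ m) (a b : Fin m → ℕ)
    (hA : 0 < ∑ i, a i) (hB : 0 < ∑ j, b j)
    (hmis : ((Finset.univ.sup a : ℕ) : ℝ) / (∑ i, (a i : ℝ)) <
            ((Finset.univ.sup b : ℕ) : ℝ) / (∑ j, (b j : ℝ)))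
    (p q : Fin m → ℝ)
    (hp0 : ∀ i, 0 ≤ p i) (hp1 : (∑ i, p i) = 1)
    (hq0 : ∀ j, 0 ≤ q j) (hq1 : (∑ j, q j) = 1)
    (hcon : (⨆ j, q j) ≤ (⨆ i, p i))
    (hmax : ∀ p' q' : Fin m → ℝ, (∀ i, 0 ≤ p' i) → (∑ i, p' i) = 1 →
      (∀ j, 0 ≤ q' j) → (∑ j, q' j) = 1 → (⨆ j, q' j) ≤ (⨆ i, p' i) →
      (∏ i, p' i ^ a i) * (∏ j, q' j ^ b j) ≤
        (∏ i, p i ^ a i) * (∏ j, q j ^ b j)) :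
    (⨆ i, p i) = (⨆ j, q j) := by
  have hm0 : 0 < m := by omega
  haveI : Nonempty (Fin m) := Fin.pos_iff_nonempty.mp hm0
  have hmne : (m:ℝ) ≠ 0 := Nat.cast_ne_zero.mpr (by omega)
  have hAr : 0 < ∑ i, (a i : ℝ) := by
    rw [← Nat.cast_sum]; exact_mod_cast hA
  have hBr : 0 < ∑ j, (b j : ℝ) := by
    rw [← Nat.cast_sum]; exact_mod_cast hB
  have hminv : (0:ℝ) < (m:ℝ)⁻¹ := by
    have : (0:ℝ) < (m:ℝ) := by exact_mod_cast hm0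
    exact inv_pos.mpr this
  have huni : ∀ (c : Fin m → ℕ), (0:ℝ) < ∏ i, ((m:ℝ)⁻¹) ^ c i :=
    fun c => Finset.prod_pos fun i _ => pow_pos hminv _
  have hu0 : ∀ i : Fin m, (0:ℝ) ≤ (m:ℝ)⁻¹ := fun _ => hminv.le
  have hu1 : ∑ _i : Fin m, (m:ℝ)⁻¹ = 1 := by
    rw [Finset.sum_const, Finset.card_univ, Fintype.card_fin, nsmul_eq_mul,
      mul_inv_cancel₀ hmne]
  have hval := hmax (fun _ => (m:ℝ)⁻¹) (fun _ => (m:ℝ)⁻¹) hu0 hu1 hu0 hu1 le_rfl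
  have hvalpos : 0 < (∏ i, p i ^ a i) * (∏ j, q j ^ b j) :=
    lt_of_lt_of_le (mul_pos (huni a) (huni b)) hval
  have hLp0 : 0 ≤ ∏ i, p i ^ a i := Finset.prod_nonneg fun i _ => pow_nonneg (hp0 i) _
  have hLq0 : 0 ≤ ∏ j, q j ^ b j := Finset.prod_nonneg fun j _ => pow_nonneg (hq0 j) _
  have hLp : 0 < ∏ i, p i ^ a i :=
    lt_of_le_of_ne hLp0 (fun h => by rw [← h] at hvalpos; simp at hvalpos)
  have hLq : 0 < ∏ j, q j ^ b j :=
    lt_of_le_of_ne hLq0 (fun h => by rw [← h] at hvalpos; simp at hvalpos)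
  obtain ⟨i0, hi0, hsp0⟩ := fin_sup_eq hm0 p
  obtain ⟨j0, hj0, hsq0⟩ := fin_sup_eq hm0 q
  by_contra hne
  obtain ⟨s, hsdef⟩ : ∃ x : ℝ, x = ⨆ i, p i := ⟨_, rfl⟩
  obtain ⟨t, htdef⟩ : ∃ x : ℝ, x = ⨆ j, q j := ⟨_, rfl⟩
  have hsp : s = p i0 := hsdef.trans hsp0
  have hsq : t = q j0 := htdef.trans hsq0
  have hcon' : t ≤ s := by rw [hsdef, htdef]; exact hcon
  have hts : t < s := lt_of_le_of_ne hcon' (by rw [hsdef, htdef]; exact fun h => hne h.symm)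
  have hspos : 0 < s := by
    rcases lt_or_ge 0 s with h | h
    · exact h
    · exfalso
      have : ∑ i, p i = 0 := Finset.sum_eq_zero fun i _ =>
        le_antisymm (le_trans (hi0 i) (le_trans (le_of_eq hsp.symm) h)) (hp0 i)
      rw [hp1] at this; norm_num at this
  have htpos : 0 < t := by
    rcases lt_or_ge 0 t with h | h
    · exact h
    · exfalso
      have : ∑ j, q j = 0 := Finset.sum_eq_zero fun j _ =>
        le_antisymm (le_trans (hj0 j) (le_trans (le_of_eq hsq.symm) h)) (hq0 j)
      rw [hq1] at this; norm_num at this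
  have hs1 : s ≤ 1 := by
    rw [hsp, ← hp1]
    exact Finset.single_le_sum (fun i _ => hp0 i) (Finset.mem_univ i0)
  -- q-side perturbation with ε = s - t
  have hqeq : ∀ j, q j = (b j : ℝ) / (∑ k, (b k : ℝ)) := by
    obtain ⟨ε, hεdef⟩ : ∃ x : ℝ, x = s - t := ⟨_, rfl⟩
    have hε0 : 0 < ε := by rw [hεdef]; linarith
    have hε1 : ε < 1 := by rw [hεdef]; linarith
    obtain ⟨q', hq'def⟩ :
        ∃ f : Fin m → ℝ, f = fun j => (1 - ε) * q j + ε * ((b j : ℝ) / (∑ k, (b k : ℝ))) :=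
      ⟨_, rfl⟩
    have hq'app : ∀ j, q' j = (1 - ε) * q j + ε * ((b j : ℝ) / (∑ k, (b k : ℝ))) := by
      intro j; rw [hq'def]
    have hq'0 : ∀ j, 0 ≤ q' j := by
      intro j
      have h1 : (0:ℝ) ≤ (b j : ℝ) / (∑ k, (b k : ℝ)) := div_nonneg (Nat.cast_nonneg _) hBr.le
      have h2 := hq0 j
      rw [hq'app j]
      have h3 : (0:ℝ) ≤ 1 - ε := by linarith
      nlinarith [mul_nonneg h3 h2, mul_nonneg hε0.le h1]
    have hbs : ∑ j, (b j : ℝ) / (∑ k, (b k : ℝ)) = 1 := by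
      rw [← Finset.sum_div]; exact div_self (ne_of_gt hBr)
    have hq'1 : ∑ j, q' j = 1 := by
      rw [hq'def, Finset.sum_add_distrib, ← Finset.mul_sum, ← Finset.mul_sum, hq1, hbs]
      ring
    have hq'sup : (⨆ j, q' j) ≤ ⨆ i, p i := by
      rw [← hsdef]
      apply ciSup_le
      intro j
      rw [hq'app j]
      have h1 : q j ≤ t := le_trans (hj0 j) (le_of_eq hsq.symm)
      have h2 : (b j : ℝ) / (∑ k, (b k : ℝ)) ≤ 1 := by
        rw [div_le_one hBr]
        exact Finset.single_le_sum (f := fun k => ((b k : ℝ)))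
          (fun k _ => Nat.cast_nonneg _) (Finset.mem_univ j)
      have h3 : 0 ≤ t := htpos.le
      nlinarith [mul_le_mul_of_nonneg_left h1 (by linarith : (0:ℝ) ≤ 1 - ε),
        mul_le_mul_of_nonneg_left h2 hε0.le, mul_nonneg hε0.le h3]
    have hres := hmax p q' hp0 hp1 hq'0 hq'1 hq'sup
    have hqle : ∏ j, q' j ^ b j ≤ ∏ j, q j ^ b j :=
      le_of_mul_le_mul_left hres hLp
    rw [hq'def] at hqle
    exact perturb b hBr q hq0 hq1 hLq hε0 hε1 hqle
  -- p-side perturbation with ε' = (s - t)/s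
  have hpeq : ∀ i, p i = (a i : ℝ) / (∑ k, (a k : ℝ)) := by
    obtain ⟨ε, hεdef⟩ : ∃ x : ℝ, x = (s - t) / s := ⟨_, rfl⟩
    have hε0 : 0 < ε := by rw [hεdef]; exact div_pos (by linarith) hspos
    have hε1 : ε < 1 := by rw [hεdef, div_lt_one hspos]; linarith
    obtain ⟨p', hp'def⟩ :
        ∃ f : Fin m → ℝ, f = fun i => (1 - ε) * p i + ε * ((a i : ℝ) / (∑ k, (a k : ℝ))) :=
      ⟨_, rfl⟩
    have hp'app : ∀ i, p' i = (1 - ε) * p i + ε * ((a i : ℝ) / (∑ k, (a k : ℝ))) := by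
      intro i; rw [hp'def]
    have hp'0 : ∀ i, 0 ≤ p' i := by
      intro i
      have h1 : (0:ℝ) ≤ (a i : ℝ) / (∑ k, (a k : ℝ)) := div_nonneg (Nat.cast_nonneg _) hAr.le
      have h2 := hp0 i
      rw [hp'app i]
      have h3 : (0:ℝ) ≤ 1 - ε := by linarith
      nlinarith [mul_nonneg h3 h2, mul_nonneg hε0.le h1]
    have has : ∑ i, (a i : ℝ) / (∑ k, (a k : ℝ)) = 1 := by
      rw [← Finset.sum_div]; exact div_self (ne_of_gt hAr)
    have hp'1 : ∑ i, p' i = 1 := by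
      rw [hp'def, Finset.sum_add_distrib, ← Finset.mul_sum, ← Finset.mul_sum, hp1, has]
      ring
    have hp'sup : (⨆ j, q j) ≤ ⨆ i, p' i := by
      rw [← htdef]
      have hsne : s ≠ 0 := ne_of_gt hspos
      have h3 : (1 - ε) * p i0 = t := by
        rw [← hsp, hεdef]
        field_simp
        ring
      have h2 : (0:ℝ) ≤ (a i0 : ℝ) / (∑ k, (a k : ℝ)) := div_nonneg (Nat.cast_nonneg _) hAr.le
      have h1 : t ≤ p' i0 := by
        rw [hp'app i0]
        nlinarith [mul_nonneg hε0.le h2]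
      exact le_trans h1 (le_ciSup (Set.finite_range p').bddAbove i0)
    have hres := hmax p' q hp'0 hp'1 hq0 hq1 hp'sup
    have hple : ∏ i, p' i ^ a i ≤ ∏ i, p i ^ a i :=
      le_of_mul_le_mul_right hres hLq
    rw [hp'def] at hple
    exact perturb a hAr p hp0 hp1 hLp hε0 hε1 hple
  -- conclude
  have hsup_a : s = ((Finset.univ.sup a : ℕ) : ℝ) / (∑ k, (a k : ℝ)) := by
    have h1 : a i0 = Finset.univ.sup a := by
      apply le_antisymm (Finset.le_sup (Finset.mem_univ i0))
      apply Finset.sup_le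
      intro i _
      have h := hi0 i
      rw [hpeq i, hpeq i0] at h
      have h2 : (a i : ℝ) ≤ (a i0 : ℝ) := by
        have h3 := mul_le_mul_of_nonneg_right h hAr.le
        rwa [div_mul_cancel₀ _ (ne_of_gt hAr), div_mul_cancel₀ _ (ne_of_gt hAr)] at h3
      exact_mod_cast h2
    rw [hsp, hpeq i0, h1]
  have hsup_b : t = ((Finset.univ.sup b : ℕ) : ℝ) / (∑ k, (b k : ℝ)) := by
    have h1 : b j0 = Finset.univ.sup b := by
      apply le_antisymm (Finset.le_sup (Finset.mem_univ j0))
      apply Finset.sup_le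
      intro j _
      have h := hj0 j
      rw [hqeq j, hqeq j0] at h
      have h2 : (b j : ℝ) ≤ (b j0 : ℝ) := by
        have h3 := mul_le_mul_of_nonneg_right h hBr.le
        rwa [div_mul_cancel₀ _ (ne_of_gt hBr), div_mul_cancel₀ _ (ne_of_gt hBr)] at h3
      exact_mod_cast h2
    rw [hsq, hqeq j0, h1]
  rw [← hsup_a, ← hsup_b] at hmis
  linarith
end
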